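/- arXiv:1809.09587 — 4 statements merged into one kernel-verified Lean document; each statement's English description precedes it below -/
import Mathlib

section
/- Let n be a positive integer and let X be an S(2n)-space. Then for every subset A of X, the cardinality of the θⁿ-closure of A satisfies |cl_{θⁿ}(A)| ≤ |A|^{κ_{θ(n)}(X)} (cardinal exponentiation). -/
open Cardinal Set

universe u

/-- The θⁿ-closure: `x ∈ thetaCl n M` iff there is NO chain of open sets
`U 0 ⊆ U 1 ⊆ ... ⊆ U (n-1)` with `x ∈ U 0`, `closure (U i) ⊆ U (i+1)` for `i+1 < n`,
and `closure (U (n-1)) ∩ M = ∅`. -/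
def thetaCl (n : ℕ) {X : Type u} [TopologicalSpace X] (M : Set X) : Set X :=
  {x | ¬ ∃ U : ℕ → Set X, (∀ i, i < n → IsOpen (U i)) ∧ x ∈ U 0 ∧
    (∀ i, i + 1 < n → closure (U i) ⊆ U (i + 1)) ∧
    closure (U (n - 1)) ∩ M = ∅}

/-- The θ₀ⁿ-closure: as `thetaCl` but the last set itself misses `M`. -/
def theta0Cl (n : ℕ) {X : Type u} [TopologicalSpace X] (M : Set X) : Set X :=
  {x | ¬ ∃ U : ℕ → Set X, (∀ i, i < n → IsOpen (U i)) ∧ x ∈ U 0 ∧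
    (∀ i, i + 1 < n → closure (U i) ⊆ U (i + 1)) ∧
    U (n - 1) ∩ M = ∅}

/-- `X` is an S(m)-space: any two distinct points are S(m)-separated. -/
def SSpace (m : ℕ) (X : Type u) [TopologicalSpace X] : Prop :=
  ∀ x y : X, x ≠ y → x ∉ thetaCl m ({y} : Set X)

/-- `U` is an n-hull of `A`: there are open sets `V 0, ..., V (n-1) = U` with
`A ⊆ V 0` and `closure (V i) ⊆ V (i+1)` for `i+1 < n`. -/
def IsNHull (n : ℕ) {X : Type u} [TopologicalSpace X] (A U : Set X) : Prop :=
  ∃ V : ℕ → Set X, (∀ i, i < n → IsOpen (V i)) ∧ A ⊆ V 0 ∧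
    (∀ i, i + 1 < n → closure (V i) ⊆ V (i + 1)) ∧ U = V (n - 1)

/-- A closed n-hull of `A` is the closure of an n-hull of `A`. -/
def IsClosedNHull (n : ℕ) {X : Type u} [TopologicalSpace X] (A W : Set X) : Prop :=
  ∃ U : Set X, IsNHull n A U ∧ W = closure U

/-- `κ_{θ(n)}(X)`: the smallest infinite cardinal `κ` such that every point `x` has a
family of at most `κ` closed n-hulls of `{x}` which is cofinal (under `⊇`) in all
closed n-hulls of `{x}`. -/
noncomputable def kappaTheta (n : ℕ) (X : Type u) [TopologicalSpace X] : Cardinal.{u} :=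
  sInf {κ : Cardinal.{u} | Cardinal.aleph0 ≤ κ ∧ ∀ x : X, ∃ 𝒱 : Set (Set X),
    #𝒱 ≤ κ ∧ (∀ W ∈ 𝒱, IsClosedNHull n ({x} : Set X) W) ∧
    ∀ W : Set X, IsClosedNHull n ({x} : Set X) W → ∃ B ∈ 𝒱, B ⊆ W}

/-- `κ_{θ₀(n)}(X)`: as `kappaTheta` but with (open) n-hulls of `{x}`. -/
noncomputable def kappaTheta0 (n : ℕ) (X : Type u) [TopologicalSpace X] : Cardinal.{u} :=
  sInf {κ : Cardinal.{u} | Cardinal.aleph0 ≤ κ ∧ ∀ x : X, ∃ 𝒱 : Set (Set X),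
    #𝒱 ≤ κ ∧ (∀ W ∈ 𝒱, IsNHull n ({x} : Set X) W) ∧
    ∀ W : Set X, IsNHull n ({x} : Set X) W → ∃ B ∈ 𝒱, B ⊆ W}

/-- `sL_{θ(n)}(X)`: the smallest infinite cardinal `κ` such that for every `A ⊆ X` and
every family `𝒰` of open sets with `thetaCl n A ⊆ ⋃₀ 𝒰` there is `𝒱 ⊆ 𝒰` with
`#𝒱 ≤ κ` and `A ⊆ closure (⋃₀ 𝒱)`. -/
noncomputable def sLTheta (n : ℕ) (X : Type u) [TopologicalSpace X] : Cardinal.{u} :=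
  sInf {κ : Cardinal.{u} | Cardinal.aleph0 ≤ κ ∧ ∀ (A : Set X) (𝒰 : Set (Set X)),
    (∀ U ∈ 𝒰, IsOpen U) → thetaCl n A ⊆ ⋃₀ 𝒰 →
    ∃ 𝒱 ⊆ 𝒰, #𝒱 ≤ κ ∧ A ⊆ closure (⋃₀ 𝒱)}

/-- `sL_{θ₀(n)}(X)`: the smallest infinite cardinal `κ` such that for every θ₀ⁿ-closed
`A ⊆ X` and every family `𝒰` of open sets covering `A` there is `𝒱 ⊆ 𝒰` with
`#𝒱 ≤ κ` and `A ⊆ closure (⋃₀ 𝒱)`. -/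
noncomputable def sLTheta0 (n : ℕ) (X : Type u) [TopologicalSpace X] : Cardinal.{u} :=
  sInf {κ : Cardinal.{u} | Cardinal.aleph0 ≤ κ ∧ ∀ (A : Set X) (𝒰 : Set (Set X)),
    theta0Cl n A = A → (∀ U ∈ 𝒰, IsOpen U) → A ⊆ ⋃₀ 𝒰 →
    ∃ 𝒱 ⊆ 𝒰, #𝒱 ≤ κ ∧ A ⊆ closure (⋃₀ 𝒱)}

/-- `sL_{s(n)}(X)`: the smallest infinite cardinal `κ` such that for every θⁿ-closed
`A ⊆ X` and every S(n)-cover `𝒰` with respect to `A` (i.e. `A` is covered by the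
θⁿ-interiors of members of `𝒰`) there is `𝒱 ⊆ 𝒰` with `#𝒱 ≤ κ` and
`A ⊆ closure (⋃₀ 𝒱)`. -/
noncomputable def sLs (n : ℕ) (X : Type u) [TopologicalSpace X] : Cardinal.{u} :=
  sInf {κ : Cardinal.{u} | Cardinal.aleph0 ≤ κ ∧ ∀ (A : Set X) (𝒰 : Set (Set X)),
    thetaCl n A = A → (∀ U ∈ 𝒰, IsOpen U) →
    (A ⊆ ⋃ U ∈ 𝒰, (thetaCl n Uᶜ)ᶜ) →
    ∃ 𝒱 ⊆ 𝒰, #𝒱 ≤ κ ∧ A ⊆ closure (⋃₀ 𝒱)}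

/-- `qM_{θ(n)}(X)`: the θ(n)-quasi-Menger number. -/
noncomputable def qMTheta (n : ℕ) (X : Type u) [TopologicalSpace X] : Cardinal.{u} :=
  sInf {κ : Cardinal.{u} | Cardinal.aleph0 ≤ κ ∧ ∀ A : Set X, IsClosed A →
    ∀ 𝒰 : κ.out → Set (Set X), (∀ α, ∀ U ∈ 𝒰 α, IsOpen U) →
    A ⊆ ⋃ α, ⋃₀ (𝒰 α) →
    ∃ 𝒱 : κ.out → Set (Set X), (∀ α, 𝒱 α ⊆ 𝒰 α ∧ (𝒱 α).Finite) ∧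
      A ⊆ ⋃ α, thetaCl n (⋃₀ (𝒱 α))}

/-- `qM_{θ₀(n)}(X)`: the θ₀(n)-quasi-Menger number. -/
noncomputable def qMTheta0 (n : ℕ) (X : Type u) [TopologicalSpace X] : Cardinal.{u} :=
  sInf {κ : Cardinal.{u} | Cardinal.aleph0 ≤ κ ∧ ∀ A : Set X, IsClosed A →
    ∀ 𝒰 : κ.out → Set (Set X), (∀ α, ∀ U ∈ 𝒰 α, IsOpen U) →
    A ⊆ ⋃ α, ⋃₀ (𝒰 α) →
    ∃ 𝒱 : κ.out → Set (Set X), (∀ α, 𝒱 α ⊆ 𝒰 α ∧ (𝒱 α).Finite) ∧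
      A ⊆ ⋃ α, theta0Cl n (⋃₀ (𝒱 α))}


/-!
A point `x` of `cl_{θⁿ}(A)` is recorded by the family of traces `W ∩ S`, where `W` runs over a
base `𝒱` of closed n-hulls of `{x}` of size `≤ κ = κ_{θ(n)}(X)` and `S ⊆ A` contains one point of
each `W ∈ 𝒱`. Since closed n-hulls are directed downwards, every trace still has `x` in its
θⁿ-closure. Conversely, in an S(2n)-space each `y ≠ x` has a closed n-hull `F` of `{x}` with
`y ∉ cl_{θⁿ}(F)`, and some trace lies in `F`. So the family of traces determines `x`, and there
are at most `(|A| ^ κ) ^ κ = |A| ^ κ` such families.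
-/

namespace Cardinal

theorem mk_nonempty_bounded_subset_le {Y : Type u} (B : Set Y) (κ : Cardinal.{u}) :
    #{T : Set Y | T ⊆ B ∧ T.Nonempty ∧ #T ≤ κ} ≤ #B ^ κ := by
  induction κ using Cardinal.inductionOn with | _ I
  rw [power_def]
  refine (mk_le_mk_of_subset ?_).trans (mk_range_le (f := fun g : I → B => (↑) '' range g))
  rintro T ⟨hTB, hT, ⟨e⟩⟩
  have : Nonempty T := hT.to_subtype
  refine ⟨inclusion hTB ∘ Function.invFun e, ?_⟩
  dsimp only
  rw [← range_comp, ← Function.comp_assoc, val_comp_inclusion, range_comp,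
    (Function.invFun_surjective e.injective).range_eq, image_univ, Subtype.range_coe]

end Cardinal

section ThetaClosure

variable {n : ℕ} {X : Type u} [TopologicalSpace X]

def IsClosedNHullBase (n : ℕ) (x : X) (𝒱 : Set (Set X)) : Prop :=
  (∀ W ∈ 𝒱, IsClosedNHull n {x} W) ∧ ∀ W, IsClosedNHull n {x} W → ∃ B ∈ 𝒱, B ⊆ W

theorem kappaTheta_spec (n : ℕ) (X : Type u) [TopologicalSpace X] :
    ℵ₀ ≤ kappaTheta n X ∧
      ∀ x : X, ∃ 𝒱 : Set (Set X), #𝒱 ≤ kappaTheta n X ∧ IsClosedNHullBase n x 𝒱 := by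
  show kappaTheta n X ∈ {κ | ℵ₀ ≤ κ ∧ ∀ x : X, ∃ 𝒱 : Set (Set X), #𝒱 ≤ κ ∧ IsClosedNHullBase n x 𝒱}
  exact csInf_mem ⟨max ℵ₀ #(Set X), le_max_left _ _, fun x =>
    ⟨{W | IsClosedNHull n {x} W}, (mk_set_le _).trans (le_max_right _ _),
      fun _ hW => hW, fun W hW => ⟨W, hW, subset_rfl⟩⟩⟩

theorem isClosedNHull_univ (n : ℕ) (A : Set X) : IsClosedNHull n A univ :=
  ⟨univ, ⟨fun _ => univ, fun _ _ => isOpen_univ, subset_univ _, fun _ _ => subset_univ _, rfl⟩,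
    closure_univ.symm⟩

theorem IsClosedNHullBase.nonempty {x : X} {𝒱 : Set (Set X)} (h𝒱 : IsClosedNHullBase n x 𝒱) :
    𝒱.Nonempty :=
  let ⟨B, hB, _⟩ := h𝒱.2 univ (isClosedNHull_univ n _)
  ⟨B, hB⟩

theorem IsClosedNHull.exists_subset_inter {A W W' : Set X} (hW : IsClosedNHull n A W)
    (hW' : IsClosedNHull n A W') : ∃ G, IsClosedNHull n A G ∧ G ⊆ W ∩ W' := by
  obtain ⟨_, ⟨V, hVo, hAV, hVc, rfl⟩, rfl⟩ := hW
  obtain ⟨_, ⟨V', hVo', hAV', hVc', rfl⟩, rfl⟩ := hW'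
  refine ⟨_, ⟨_, ⟨fun i => V i ∩ V' i, fun i hi => (hVo i hi).inter (hVo' i hi),
    subset_inter hAV hAV', fun i hi => ?_, rfl⟩, rfl⟩, closure_inter_subset_inter_closure _ _⟩
  exact (closure_inter_subset_inter_closure _ _).trans (inter_subset_inter (hVc i hi) (hVc' i hi))

theorem mem_thetaCl_iff {M : Set X} {x : X} :
    x ∈ thetaCl n M ↔ ∀ W, IsClosedNHull n {x} W → (W ∩ M).Nonempty := by
  simp only [thetaCl, IsClosedNHull, IsNHull, mem_ofPred_eq, singleton_subset_iff,
    ← not_nonempty_iff_eq_empty]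
  constructor
  · rintro h W ⟨_, ⟨V, hVo, hxV, hVc, rfl⟩, rfl⟩
    by_contra hW
    exact h ⟨V, hVo, hxV, hVc, hW⟩
  · rintro h ⟨V, hVo, hxV, hVc, hV⟩
    exact hV (h _ ⟨_, ⟨V, hVo, hxV, hVc, rfl⟩, rfl⟩)

theorem thetaCl_mono {M N : Set X} (h : M ⊆ N) : thetaCl n M ⊆ thetaCl n N := fun _ hx =>
  mem_thetaCl_iff.2 fun W hW => (mem_thetaCl_iff.1 hx W hW).mono (inter_subset_inter_right W h)

theorem exists_subset_mk_le_forall_inter_nonempty {A : Set X} {x : X} (hx : x ∈ thetaCl n A)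
    {𝒱 : Set (Set X)} (h𝒱 : ∀ W ∈ 𝒱, IsClosedNHull n {x} W) :
    ∃ S ⊆ A, #S ≤ #𝒱 ∧ ∀ W ∈ 𝒱, (W ∩ S).Nonempty := by
  choose p hp using fun W : 𝒱 => mem_thetaCl_iff.1 hx W.1 (h𝒱 W W.2)
  exact ⟨range p, range_subset_iff.2 fun W => (hp W).2, mk_range_le,
    fun W hW => ⟨p ⟨W, hW⟩, (hp ⟨W, hW⟩).1, mem_range_self _⟩⟩

theorem IsClosedNHullBase.mem_thetaCl_inter {x : X} {𝒱 : Set (Set X)} {S W : Set X}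
    (h𝒱 : IsClosedNHullBase n x 𝒱) (hS : ∀ B ∈ 𝒱, (B ∩ S).Nonempty)
    (hW : IsClosedNHull n {x} W) : x ∈ thetaCl n (W ∩ S) := by
  refine mem_thetaCl_iff.2 fun F hF => ?_
  obtain ⟨G, hG, hGWF⟩ := hW.exists_subset_inter hF
  obtain ⟨B, hB, hBG⟩ := h𝒱.2 G hG
  obtain ⟨p, hpB, hpS⟩ := hS B hB
  obtain ⟨hpW, hpF⟩ := hGWF (hBG hpB)
  exact ⟨p, hpF, hpW, hpS⟩

theorem closure_compl_closure_subset {U V : Set X} (hV : IsOpen V) (h : closure U ⊆ V) :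
    closure (closure V)ᶜ ⊆ (closure U)ᶜ := by
  rw [closure_compl, compl_subset_compl]
  exact h.trans hV.subset_interior_closure

theorem SSpace.exists_closedNHull_not_mem_thetaCl (hX : SSpace (2 * n) X) (hn : 0 < n)
    {x y : X} (hxy : x ≠ y) : ∃ F, IsClosedNHull n {x} F ∧ y ∉ thetaCl n F := by
  have h := hX x y hxy
  simp only [thetaCl, mem_ofPred_eq, not_not] at h
  obtain ⟨U, hUo, hxU, hUc, hUy⟩ := h
  -- Read backwards through complements of closures, the 2n-chain `U` around `x` gives an n-chain
  -- around `y` whose last closure misses `closure (U (n - 1))`.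
  have hrev : ∀ i, i + 1 < 2 * n → closure (closure (U (i + 1)))ᶜ ⊆ (closure (U i))ᶜ :=
    fun i hi => closure_compl_closure_subset (hUo _ hi) (hUc i hi)
  refine ⟨closure (U (n - 1)), ⟨_, ⟨U, fun i hi => hUo i (by omega), singleton_subset_iff.2 hxU,
    fun i hi => hUc i (by omega), rfl⟩, rfl⟩,
    fun hy => hy ⟨fun i => (closure (U (2 * n - 1 - i)))ᶜ,
      fun i _ => isClosed_closure.isOpen_compl, fun hyU => ?_, fun i hi => ?_, ?_⟩⟩
  · exact (hUy ▸ ⟨hyU, rfl⟩ : y ∈ (∅ : Set X))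
  · have := hrev (2 * n - 2 - i) (by omega)
    rwa [show 2 * n - 2 - i + 1 = 2 * n - 1 - i by omega,
      ← show 2 * n - 1 - (i + 1) = 2 * n - 2 - i by omega] at this
  · have := hrev (n - 1) (by omega)
    rw [show n - 1 + 1 = n by omega] at this
    show closure (closure (U (2 * n - 1 - (n - 1))))ᶜ ∩ closure (U (n - 1)) = ∅
    rw [show 2 * n - 1 - (n - 1) = n by omega, ← disjoint_iff_inter_eq_empty]
    exact disjoint_compl_left.mono_left this

theorem SSpace.image_inter_ne (hX : SSpace (2 * n) X) (hn : 0 < n) {x y : X} (hxy : x ≠ y)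
    {𝒱 𝒲 : Set (Set X)} {S T : Set X} (h𝒱 : IsClosedNHullBase n x 𝒱)
    (h𝒲 : IsClosedNHullBase n y 𝒲) (hT : ∀ W ∈ 𝒲, (W ∩ T).Nonempty) :
    (· ∩ S) '' 𝒱 ≠ (· ∩ T) '' 𝒲 := by
  intro h
  obtain ⟨F, hF, hyF⟩ := hX.exists_closedNHull_not_mem_thetaCl hn hxy
  obtain ⟨W, hW, hWF⟩ := h𝒱.2 F hF
  obtain ⟨W', hW', hW'W⟩ : W ∩ S ∈ (· ∩ T) '' 𝒲 := h ▸ mem_image_of_mem _ hW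
  have hy : y ∈ thetaCl n (W ∩ S) := hW'W ▸ h𝒲.mem_thetaCl_inter hT (h𝒲.1 W' hW')
  exact hyF (thetaCl_mono (inter_subset_left.trans hWF) hy)

end ThetaClosure

theorem stmt0 (n : ℕ) (hn : 0 < n) (X : Type u) [TopologicalSpace X]
    (hX : SSpace (2 * n) X) (A : Set X) :
    #(thetaCl n A) ≤ #A ^ kappaTheta n X := by
  set K := kappaTheta n X
  obtain ⟨hK, h𝒱⟩ := kappaTheta_spec n X
  choose 𝒱 h𝒱K h𝒱 using h𝒱
  choose! S hSA hSK hS using fun x (hx : x ∈ thetaCl n A) =>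
    exists_subset_mk_le_forall_inter_nonempty hx (h𝒱 x).1
  let traces : X → Set (Set X) := fun x => (· ∩ S x) '' 𝒱 x
  have hinj : InjOn traces (thetaCl n A) := fun x _ y hy hxy => by
    by_contra hne
    exact hX.image_inter_ne hn hne (h𝒱 x) (h𝒱 y) (hS y hy) hxy
  have hmaps : MapsTo traces (thetaCl n A)
      {C | C ⊆ {T | T ⊆ A ∧ T.Nonempty ∧ #T ≤ K} ∧ C.Nonempty ∧ #C ≤ K} := by
    refine fun x hx => ⟨?_, (h𝒱 x).nonempty.image _, mk_image_le.trans (h𝒱K x)⟩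
    rintro _ ⟨W, hW, rfl⟩
    exact ⟨inter_subset_right.trans (hSA x hx), hS x hx W hW,
      (mk_le_mk_of_subset inter_subset_right).trans ((hSK x hx).trans (h𝒱K x))⟩
  calc #(thetaCl n A) = #(traces '' thetaCl n A) := (mk_image_eq_of_injOn _ _ hinj).symm
    _ ≤ #{T : Set X | T ⊆ A ∧ T.Nonempty ∧ #T ≤ K} ^ K :=
      (mk_le_mk_of_subset hmaps.image_subset).trans (mk_nonempty_bounded_subset_le _ _)
    _ ≤ (#A ^ K) ^ K := power_le_power_right (mk_nonempty_bounded_subset_le _ _)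
    _ = #A ^ K := by rw [← power_mul, mul_eq_self hK]
end

section
/- Let n be a positive integer and let X be an S(2n−1)-space. Then for every subset A of X, the cardinality of the θ₀ⁿ-closure of A satisfies |cl_{θ₀ⁿ}(A)| ≤ |A|^{κ_{θ₀(n)}(X)} (cardinal exponentiation). -/
open Cardinal Set

universe u

/-!
Each point of `cl_{θ₀ⁿ}(A)` has a base of at most `κ = κ_{θ₀(n)}(X)` n-hulls, and every n-hull
of such a point meets `A`; choosing a point of `A` in each pairwise intersection of base members
assigns to the point a family `κ × κ → A`. Two distinct points get different families, because
in an S(2n−1)-space they have disjoint n-hulls: the middle set `U (n-1)` of a separating chain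
of length `2n−1` and the complement of its closure, which is the end of the chain of complements
of closures read backwards. Hence `|cl_{θ₀ⁿ}(A)| ≤ |A|^(κ·κ) = |A|^κ`.
-/

theorem mk_le_pow_of_separating_families {α : Type u} {S A : Set α} {κ : Cardinal.{u}}
    (hκ : ℵ₀ ≤ κ) (𝒩 : α → Set (Set α)) (hcard : ∀ x ∈ S, #(𝒩 x) ≤ κ)
    (hne : ∀ x ∈ S, (𝒩 x).Nonempty)
    (hmeet : ∀ x ∈ S, ∀ U ∈ 𝒩 x, ∀ V ∈ 𝒩 x, (U ∩ V ∩ A).Nonempty)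
    (hsep : ∀ x ∈ S, ∀ y ∈ S, x ≠ y → ∃ U ∈ 𝒩 x, ∃ V ∈ 𝒩 y, Disjoint U V) :
    #S ≤ #A ^ κ := by
  have hsurj : ∀ x : S, ∃ g : κ.out → 𝒩 x, Function.Surjective g := fun x => by
    obtain ⟨f⟩ : #(𝒩 x) ≤ #κ.out := by rw [mk_out]; exact hcard x x.2
    have := (hne x x.2).to_subtype
    exact ⟨Function.invFun f, Function.invFun_surjective f.injective⟩
  choose g hg using hsurj
  choose F hF using fun (x : S) (i j : κ.out) =>
    hmeet x x.2 _ (g x i).2 _ (g x j).2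
  have hinj : Function.Injective fun (x : S) (i j : κ.out) => (⟨F x i j, (hF x i j).2⟩ : A) := by
    intro x y hxy
    by_contra hne'
    obtain ⟨U, hU, V, hV, hUV⟩ := hsep x x.2 y y.2 (Subtype.val_injective.ne hne')
    obtain ⟨i, hi⟩ := hg x ⟨U, hU⟩
    obtain ⟨j, hj⟩ := hg y ⟨V, hV⟩
    have hFU : F x i j ∈ U := by
      have := (hF x i j).1.1
      rwa [hi] at this
    have hFV : F x i j ∈ V := by
      rw [show F x i j = F y i j from congrArg Subtype.val (congrFun₂ hxy i j)]
      have := (hF y i j).1.2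
      rwa [hj] at this
    exact hUV.notMem_of_mem_left hFU hFV
  calc #S ≤ #(κ.out → κ.out → A) := mk_le_of_injective hinj
    _ = #A ^ (κ * κ) := by rw [← power_def, ← power_def, mk_out, power_mul]
    _ = #A ^ κ := by rw [mul_eq_self hκ]

section

variable {X : Type u} [TopologicalSpace X]

def IsClosureChain (m : ℕ) (U : ℕ → Set X) : Prop :=
  (∀ i, i < m → IsOpen (U i)) ∧ ∀ i, i + 1 < m → closure (U i) ⊆ U (i + 1)

namespace IsClosureChain

variable {m : ℕ} {U : ℕ → Set X}

lemma isNHull {n : ℕ} {A : Set X} (hU : IsClosureChain m U) (hnm : n ≤ m) (hA : A ⊆ U 0) :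
    IsNHull n A (U (n - 1)) :=
  ⟨U, fun i hi => hU.1 i (hi.trans_le hnm), hA, fun i hi => hU.2 i (hi.trans_le hnm), rfl⟩

lemma compl_closure_rev (hU : IsClosureChain m U) :
    IsClosureChain m fun i => (closure (U (m - 1 - i)))ᶜ := by
  refine ⟨fun i _ => isClosed_closure.isOpen_compl, fun i hi => ?_⟩
  have hstep : closure (U (m - 1 - (i + 1))) ⊆ U (m - 1 - i) := by
    have := hU.2 (m - 1 - (i + 1)) (by omega)
    rwa [show m - 1 - (i + 1) + 1 = m - 1 - i by omega] at this
  calc closure (closure (U (m - 1 - i)))ᶜ ⊆ (U (m - 1 - i))ᶜ :=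
        closure_minimal (compl_subset_compl.2 subset_closure) (hU.1 _ (by omega)).isClosed_compl
    _ ⊆ (closure (U (m - 1 - (i + 1))))ᶜ := compl_subset_compl.2 hstep

end IsClosureChain

lemma isNHull_univ (n : ℕ) (A : Set X) : IsNHull n A univ :=
  ⟨fun _ => univ, fun _ _ => isOpen_univ, subset_univ _, fun _ _ => subset_univ _, rfl⟩

lemma IsNHull.inter {n : ℕ} {A U U' : Set X} (h : IsNHull n A U) (h' : IsNHull n A U') :
    IsNHull n A (U ∩ U') := by
  obtain ⟨V, hVo, hAV, hVc, rfl⟩ := h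
  obtain ⟨W, hWo, hAW, hWc, rfl⟩ := h'
  exact ⟨fun i => V i ∩ W i, fun i hi => (hVo i hi).inter (hWo i hi), subset_inter hAV hAW,
    fun i hi => (closure_inter_subset_inter_closure _ _).trans
      (inter_subset_inter (hVc i hi) (hWc i hi)), rfl⟩

lemma IsNHull.inter_nonempty_of_mem_theta0Cl {n : ℕ} {A U : Set X} {x : X}
    (hU : IsNHull n {x} U) (hx : x ∈ theta0Cl n A) : (U ∩ A).Nonempty := by
  obtain ⟨V, hVo, hxV, hVc, rfl⟩ := hU
  exact nonempty_iff_ne_empty.2 fun h => hx ⟨V, hVo, hxV rfl, hVc, h⟩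

lemma SSpace.exists_disjoint_isNHull {n : ℕ} (hX : SSpace (2 * n - 1) X) {x y : X}
    (hxy : x ≠ y) :
    ∃ Hx Hy : Set X, IsNHull n {x} Hx ∧ IsNHull n {y} Hy ∧ Disjoint Hx Hy := by
  obtain ⟨U, hUo, hxU, hUc, hy⟩ := not_not.1 (hX x y hxy)
  have hU : IsClosureChain (2 * n - 1) U := ⟨hUo, hUc⟩
  refine ⟨U (n - 1), (closure (U (n - 1)))ᶜ, hU.isNHull (by omega) (singleton_subset_iff.2 hxU),
    ?_, disjoint_compl_right.mono_left subset_closure⟩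
  have hy' : {y} ⊆ (closure (U (2 * n - 1 - 1 - 0)))ᶜ :=
    singleton_subset_iff.2 (inter_singleton_eq_empty.1 hy)
  have := hU.compl_closure_rev.isNHull (n := n) (by omega) hy'
  rwa [show 2 * n - 1 - 1 - (n - 1) = n - 1 by omega] at this

end

lemma kappaTheta0_spec (n : ℕ) (X : Type u) [TopologicalSpace X] :
    ℵ₀ ≤ kappaTheta0 n X ∧ ∀ x : X, ∃ 𝒱 : Set (Set X), #𝒱 ≤ kappaTheta0 n X ∧
      (∀ W ∈ 𝒱, IsNHull n {x} W) ∧ ∀ W, IsNHull n {x} W → ∃ B ∈ 𝒱, B ⊆ W := by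
  have hne : {κ : Cardinal.{u} | ℵ₀ ≤ κ ∧ ∀ x : X, ∃ 𝒱 : Set (Set X), #𝒱 ≤ κ ∧
      (∀ W ∈ 𝒱, IsNHull n {x} W) ∧ ∀ W, IsNHull n {x} W → ∃ B ∈ 𝒱, B ⊆ W}.Nonempty :=
    ⟨max ℵ₀ #(Set X), le_max_left _ _, fun x => ⟨{U | IsNHull n {x} U},
      (mk_subtype_le _).trans (le_max_right _ _), fun _ hW => hW,
      fun W hW => ⟨W, hW, subset_rfl⟩⟩⟩
  exact csInf_mem hne

theorem stmt5_general (n : ℕ) (X : Type u) [TopologicalSpace X]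
    (hX : SSpace (2 * n - 1) X) (A : Set X) :
    #(theta0Cl n A) ≤ #A ^ kappaTheta0 n X := by
  obtain ⟨hκ, hbase⟩ := kappaTheta0_spec n X
  choose 𝒱 hcard hhull hcof using hbase
  refine mk_le_pow_of_separating_families hκ 𝒱 (fun x _ => hcard x) (fun x _ => ?_)
    (fun x hx U hU V hV => ?_) (fun x _ y _ hxy => ?_)
  · obtain ⟨B, hB, -⟩ := hcof x univ (isNHull_univ n _)
    exact ⟨B, hB⟩
  · exact ((hhull x U hU).inter (hhull x V hV)).inter_nonempty_of_mem_theta0Cl hx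
  · obtain ⟨Hx, Hy, hHx, hHy, hdisj⟩ := hX.exists_disjoint_isNHull hxy
    obtain ⟨B, hB, hBx⟩ := hcof x Hx hHx
    obtain ⟨C, hC, hCy⟩ := hcof y Hy hHy
    exact ⟨B, hB, C, hC, hdisj.mono hBx hCy⟩

theorem stmt5 (n : ℕ) (hn : 0 < n) (X : Type u) [TopologicalSpace X]
    (hX : SSpace (2 * n - 1) X) (A : Set X) :
    #(theta0Cl n A) ≤ #A ^ kappaTheta0 n X :=
  stmt5_general n X hX A
end

section
/- For every topological space X and every positive integer n, sL_{s(n)}(X) ≤ sL_{θ(n)}(X). -/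
open Cardinal Set

universe u

/-! Each θⁿ-interior of an open set `U` lies in `U`, because every set lies in its θⁿ-closure.
Hence for a θⁿ-closed `A` an S(n)-cover with respect to `A` is an open cover of `cl_{θⁿ}(A)`,
and the subfamily provided by `sL_{θ(n)}` is the one required for `sL_{s(n)}`. -/

section ThetaClosure

variable {X : Type u} [TopologicalSpace X] {n : ℕ}

lemma mem_of_closure_chain {x : X} {V : ℕ → Set X} (hx : x ∈ V 0)
    (hV : ∀ i, i + 1 < n → closure (V i) ⊆ V (i + 1)) : ∀ i, i ≤ n - 1 → x ∈ V i
  | 0, _ => hx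
  | k + 1, hk => hV k (by omega) (subset_closure (mem_of_closure_chain hx hV k (by omega)))

lemma subset_thetaCl (A : Set X) : A ⊆ thetaCl n A := by
  rintro x hxA ⟨V, -, hx, hV, hdisj⟩
  exact hdisj.subset ⟨subset_closure (mem_of_closure_chain hx hV (n - 1) le_rfl), hxA⟩

lemma compl_thetaCl_compl_subset (U : Set X) : (thetaCl n Uᶜ)ᶜ ⊆ U := by
  intro x hx
  by_contra hxU
  exact hx (subset_thetaCl Uᶜ hxU)

end ThetaClosure

section SLTheta

variable (n : ℕ) (X : Type u) [TopologicalSpace X]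

lemma sLTheta_set_nonempty :
    {κ : Cardinal.{u} | ℵ₀ ≤ κ ∧ ∀ (A : Set X) (𝒰 : Set (Set X)),
      (∀ U ∈ 𝒰, IsOpen U) → thetaCl n A ⊆ ⋃₀ 𝒰 →
      ∃ 𝒱 ⊆ 𝒰, #𝒱 ≤ κ ∧ A ⊆ closure (⋃₀ 𝒱)}.Nonempty := by
  refine ⟨max ℵ₀ #(Set X), le_max_left _ _, fun A 𝒰 _ hcov => ?_⟩
  exact ⟨𝒰, subset_rfl, (mk_set_le 𝒰).trans (le_max_right _ _),
    ((subset_thetaCl A).trans hcov).trans subset_closure⟩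

lemma aleph0_le_sLTheta : ℵ₀ ≤ sLTheta n X :=
  (csInf_mem (sLTheta_set_nonempty n X)).1

variable {n X}

lemma exists_subfamily_card_le_sLTheta {A : Set X} {𝒰 : Set (Set X)}
    (h𝒰 : ∀ U ∈ 𝒰, IsOpen U) (hcov : thetaCl n A ⊆ ⋃₀ 𝒰) :
    ∃ 𝒱 ⊆ 𝒰, #𝒱 ≤ sLTheta n X ∧ A ⊆ closure (⋃₀ 𝒱) :=
  (csInf_mem (sLTheta_set_nonempty n X)).2 A 𝒰 h𝒰 hcov

end SLTheta

lemma sLs_le {n : ℕ} {X : Type u} [TopologicalSpace X] {κ : Cardinal.{u}} (hκ : ℵ₀ ≤ κ)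
    (h : ∀ (A : Set X) (𝒰 : Set (Set X)), thetaCl n A = A → (∀ U ∈ 𝒰, IsOpen U) →
      (A ⊆ ⋃ U ∈ 𝒰, (thetaCl n Uᶜ)ᶜ) → ∃ 𝒱 ⊆ 𝒰, #𝒱 ≤ κ ∧ A ⊆ closure (⋃₀ 𝒱)) :
    sLs n X ≤ κ :=
  csInf_le' ⟨hκ, h⟩

theorem stmt11_general (X : Type u) [TopologicalSpace X] (n : ℕ) :
    sLs n X ≤ sLTheta n X := by
  refine sLs_le (aleph0_le_sLTheta n X) fun A 𝒰 hA h𝒰 hScov => ?_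
  refine exists_subfamily_card_le_sLTheta h𝒰 ?_
  rw [hA]
  exact hScov.trans (iUnion₂_subset fun U hU => (compl_thetaCl_compl_subset U).trans
    (subset_sUnion_of_mem hU))

theorem stmt11 (X : Type u) [TopologicalSpace X] (n : ℕ) (hn : 0 < n) :
    sLs n X ≤ sLTheta n X :=
  stmt11_general X n
end

section
/- For every topological space X, every positive integer n, and all points x, y ∈ X: x ∉ cl_{θⁿ}({y}) if and only if y ∉ cl_{θⁿ}({x}) (i.e., the relation of being S-separated via cl_{θⁿ} between points is symmetric for n > 0). -/
open Cardinal Set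

universe u

/-! If open sets `U 0, …, U (n-1)` witness `x ∉ thetaCl n {y}`, then the complements of their
closures, taken in reverse order, witness `y ∉ thetaCl n {x}`: for open `U`, the closure of
`(closure U)ᶜ` is disjoint from `U`. -/

theorem IsOpen.closure_compl_closure_subset_compl {X : Type*} [TopologicalSpace X] {s : Set X}
    (hs : IsOpen s) : closure (closure s)ᶜ ⊆ sᶜ := by
  rw [closure_compl]
  exact compl_subset_compl.mpr hs.subset_interior_closure

theorem notMem_thetaCl_singleton_symm {X : Type u} [TopologicalSpace X] {n : ℕ} (hn : 0 < n)
    {x y : X} (h : x ∉ thetaCl n ({y} : Set X)) : y ∉ thetaCl n ({x} : Set X) := by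
  obtain ⟨U, hopen, hxU, hchain, hlast⟩ := not_not.mp h
  rw [inter_singleton_eq_empty] at hlast
  refine not_not.mpr ⟨fun i => (closure (U (n - 1 - i)))ᶜ,
    fun _ _ => isClosed_closure.isOpen_compl, hlast, fun i hi => ?_, ?_⟩
  · have hclosure := hchain (n - 1 - (i + 1)) (by omega)
    rw [show n - 1 - (i + 1) + 1 = n - 1 - i by omega] at hclosure
    exact ((hopen _ (by omega)).closure_compl_closure_subset_compl).trans
      (compl_subset_compl.mpr hclosure)
  · simp only [Nat.sub_self, inter_singleton_eq_empty]
    exact fun hx => (hopen 0 hn).closure_compl_closure_subset_compl hx hxU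

theorem stmt12 (X : Type u) [TopologicalSpace X] (n : ℕ) (hn : 0 < n) (x y : X) :
    x ∉ thetaCl n ({y} : Set X) ↔ y ∉ thetaCl n ({x} : Set X) :=
  ⟨notMem_thetaCl_singleton_symm hn, notMem_thetaCl_singleton_symm hn⟩
end
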